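/- arXiv:2602.11018 — 4 statements merged into one kernel-verified Lean document; each statement's English description precedes it below -/
import Mathlib

section
/- For any two policies π_U and π in a discounted MDP, the difference of expected discounted returns satisfies J(π_U) = J(π) + E_{τ∼π_U}[ Σ_{t=0}^∞ γ^t A^π(s_t, a_t) ], where A^π(s,a) = Q^π(s,a) − V^π(s) is the advantage function of π. -/
/-!
Along the trajectory of `πU`, the advantage `Q - V` at time `t` has expectation
`g t - g (t + 1)`, where `g t = γ ^ t * E[VU (sₜ) - V (sₜ)]`, by the Bellman equation of `VU`
and the definition of `Q` from `V`. The series therefore telescopes to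
`g 0 = E_ρ[VU - V]`, and it converges because the state distributions keep their total mass
and stay nonnegative, so `g t = O(γ ^ t)`.
-/

namespace MDP

variable {S A : Type*} [Fintype S] [Fintype A]

def stepDist (T : S → A → S → ℝ) (π : S → A → ℝ) (μ : S → ℝ) (s' : S) : ℝ :=
  ∑ s, ∑ a, μ s * π s a * T s a s'

def bellmanBackup (r : S → A → ℝ) (γ : ℝ) (T : S → A → S → ℝ) (V : S → ℝ) (s : S) (a : A) : ℝ :=
  r s a + γ * ∑ s', T s a s' * V s'

variable {T : S → A → S → ℝ} {π : S → A → ℝ}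

theorem sum_stepDist_mul (μ f : S → ℝ) :
    ∑ s', stepDist T π μ s' * f s' = ∑ s, ∑ a, μ s * π s a * ∑ s', T s a s' * f s' := by
  simp only [stepDist, Finset.sum_mul, Finset.mul_sum, mul_assoc]
  rw [Finset.sum_comm]
  exact Finset.sum_congr rfl fun s _ => Finset.sum_comm

theorem sum_stepDist (hπ1 : ∀ s, ∑ a, π s a = 1) (hT1 : ∀ s a, ∑ s', T s a s' = 1) (μ : S → ℝ) :
    ∑ s', stepDist T π μ s' = ∑ s, μ s := by
  simpa [hT1, ← Finset.mul_sum, hπ1] using sum_stepDist_mul (T := T) (π := π) μ 1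

theorem stepDist_nonneg (hπ0 : ∀ s a, 0 ≤ π s a) (hT0 : ∀ s a s', 0 ≤ T s a s') {μ : S → ℝ}
    (hμ : ∀ s, 0 ≤ μ s) (s' : S) : 0 ≤ stepDist T π μ s' :=
  Finset.sum_nonneg fun s _ => Finset.sum_nonneg fun a _ =>
    mul_nonneg (mul_nonneg (hμ s) (hπ0 s a)) (hT0 s a s')

theorem sum_mul_bellmanBackup (r : S → A → ℝ) (γ : ℝ) (μ f : S → ℝ) :
    ∑ s, ∑ a, μ s * π s a * bellmanBackup r γ T f s a =
      ∑ s, ∑ a, μ s * π s a * r s a + γ * ∑ s', stepDist T π μ s' * f s' := by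
  simp only [bellmanBackup, sum_stepDist_mul, mul_add, Finset.sum_add_distrib, Finset.mul_sum,
    mul_left_comm γ]

theorem sum_mul_advantage {r : S → A → ℝ} {γ : ℝ} {U : S → ℝ} (hπ1 : ∀ s, ∑ a, π s a = 1)
    (hU : ∀ s, U s = ∑ a, π s a * bellmanBackup r γ T U s a) (μ V : S → ℝ) :
    ∑ s, ∑ a, μ s * π s a * (bellmanBackup r γ T V s a - V s) =
      ∑ s, μ s * (U s - V s) - γ * ∑ s', stepDist T π μ s' * (U s' - V s') := by
  have hμU : ∑ s, μ s * U s = ∑ s, ∑ a, μ s * π s a * bellmanBackup r γ T U s a := by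
    simp only [hU, Finset.mul_sum, mul_assoc]
  have hμV : ∑ s, μ s * V s = ∑ s, ∑ a, μ s * π s a * V s := by
    simp only [← Finset.sum_mul, ← Finset.mul_sum, hπ1, mul_one]
  simp only [mul_sub, Finset.sum_sub_distrib, hμU, hμV, sum_mul_bellmanBackup]
  ring

theorem nonneg_of_stepDist_succ {d : ℕ → S → ℝ} (hπ0 : ∀ s a, 0 ≤ π s a)
    (hT0 : ∀ s a s', 0 ≤ T s a s') (hd0 : ∀ s, 0 ≤ d 0 s)
    (hd : ∀ t, d (t + 1) = stepDist T π (d t)) (t : ℕ) (s : S) : 0 ≤ d t s := by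
  induction t generalizing s with
  | zero => exact hd0 s
  | succ t ih => exact hd t ▸ stepDist_nonneg hπ0 hT0 ih s

theorem sum_eq_of_stepDist_succ {d : ℕ → S → ℝ} (hπ1 : ∀ s, ∑ a, π s a = 1)
    (hT1 : ∀ s a, ∑ s', T s a s' = 1) (hd : ∀ t, d (t + 1) = stepDist T π (d t)) (t : ℕ) :
    ∑ s, d t s = ∑ s, d 0 s := by
  induction t with
  | zero => rfl
  | succ t ih => rw [hd, sum_stepDist hπ1 hT1, ih]

end MDP

theorem abs_sum_mul_le_sum_mul_norm {S : Type*} [Fintype S] {μ : S → ℝ} (hμ : ∀ s, 0 ≤ μ s)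
    (f : S → ℝ) : |∑ s, μ s * f s| ≤ (∑ s, μ s) * ‖f‖ :=
  calc |∑ s, μ s * f s| ≤ ∑ s, |μ s * f s| := Finset.abs_sum_le_sum_abs _ _
    _ ≤ ∑ s, μ s * ‖f‖ := Finset.sum_le_sum fun s _ => by
        rw [abs_mul, abs_of_nonneg (hμ s), ← Real.norm_eq_abs]
        exact mul_le_mul_of_nonneg_left (norm_le_pi_norm f s) (hμ s)
    _ = (∑ s, μ s) * ‖f‖ := (Finset.sum_mul ..).symm

theorem summable_pow_mul_sum_mul {S : Type*} [Fintype S] {d : ℕ → S → ℝ} {C γ : ℝ}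
    (hd0 : ∀ t s, 0 ≤ d t s) (hdC : ∀ t, ∑ s, d t s ≤ C) (hγ0 : 0 ≤ γ) (hγ1 : γ < 1)
    (f : S → ℝ) : Summable fun t => γ ^ t * ∑ s, d t s * f s := by
  refine .of_norm_bounded ((summable_geometric_of_lt_one hγ0 hγ1).mul_left (C * ‖f‖)) fun t => ?_
  rw [Real.norm_eq_abs, abs_mul, abs_of_nonneg (pow_nonneg hγ0 t), mul_comm]
  gcongr
  exact (abs_sum_mul_le_sum_mul_norm (hd0 t) f).trans (by gcongr; exact hdC t)

theorem Summable.tsum_sub_nat_succ {g : ℕ → ℝ} (hg : Summable g) :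
    ∑' t, (g t - g (t + 1)) = g 0 := by
  rw [hg.tsum_sub ((summable_nat_add_iff 1).2 hg), hg.tsum_eq_zero_add, add_sub_cancel_right]

open MDP in
theorem performance_difference_general
    {S A : Type} [Fintype S] [Fintype A]
    (T : S → A → S → ℝ) (r : S → A → ℝ) (ρ : S → ℝ) (γ : ℝ)
    (hγ0 : 0 < γ) (hγ1 : γ < 1)
    (hT0 : ∀ s a s', 0 ≤ T s a s') (hT1 : ∀ s a, ∑ s', T s a s' = 1)
    (hρ0 : ∀ s, 0 ≤ ρ s)
    (πU : S → A → ℝ)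
    (hπU0 : ∀ s a, 0 ≤ πU s a) (hπU1 : ∀ s, ∑ a, πU s a = 1)
    (VU V : S → ℝ)
    (hVU : ∀ s, VU s = ∑ a, πU s a * (r s a + γ * ∑ s', T s a s' * VU s'))
    (Q : S → A → ℝ)
    (hQ : ∀ s a, Q s a = r s a + γ * ∑ s', T s a s' * V s')
    (d : ℕ → S → ℝ)
    (hd0 : ∀ s, d 0 s = ρ s)
    (hds : ∀ t s', d (t + 1) s' = ∑ s, ∑ a, d t s * πU s a * T s a s') :
    (∑ s, ρ s * VU s) =
      (∑ s, ρ s * V s) +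
        ∑' t : ℕ, γ ^ t * ∑ s, ∑ a, d t s * πU s a * (Q s a - V s) := by
  have hd : ∀ t, d (t + 1) = stepDist T πU (d t) := fun t => funext (hds t)
  have hQ' : Q = bellmanBackup r γ T V := funext₂ hQ
  set g : ℕ → ℝ := fun t => γ ^ t * ∑ s, d t s * (VU s - V s)
  have hstep : ∀ t, γ ^ t * ∑ s, ∑ a, d t s * πU s a * (Q s a - V s) = g t - g (t + 1) := by
    intro t
    simp only [g, hQ', sum_mul_advantage hπU1 hVU, hd, pow_succ]
    ring
  have hg : Summable g :=
    summable_pow_mul_sum_mul (nonneg_of_stepDist_succ hπU0 hT0 (fun s => hd0 s ▸ hρ0 s) hd)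
      (fun t => (sum_eq_of_stepDist_succ hπU1 hT1 hd t).le) hγ0.le hγ1 _
  rw [tsum_congr hstep, hg.tsum_sub_nat_succ]
  simp only [g, pow_zero, one_mul, hd0, mul_sub, Finset.sum_sub_distrib]
  ring

/-- Performance difference lemma (Kakade–Langford): for any two policies `πU` and `π`
in a finite discounted MDP, `J(πU) = J(π) + E_{τ∼πU}[∑ₜ γ^t A^π(sₜ,aₜ)]`, where the
trajectory expectation is expressed via the `t`-step state distributions `d t` of `πU`. -/
theorem performance_difference
    {S A : Type} [Fintype S] [Fintype A]
    (T : S → A → S → ℝ) (r : S → A → ℝ) (ρ : S → ℝ) (γ : ℝ)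
    (hγ0 : 0 < γ) (hγ1 : γ < 1)
    (hT0 : ∀ s a s', 0 ≤ T s a s') (hT1 : ∀ s a, ∑ s', T s a s' = 1)
    (hρ0 : ∀ s, 0 ≤ ρ s) (hρ1 : ∑ s, ρ s = 1)
    (πU π : S → A → ℝ)
    (hπU0 : ∀ s a, 0 ≤ πU s a) (hπU1 : ∀ s, ∑ a, πU s a = 1)
    (hπ0 : ∀ s a, 0 ≤ π s a) (hπ1 : ∀ s, ∑ a, π s a = 1)
    (VU V : S → ℝ)
    (hVU : ∀ s, VU s = ∑ a, πU s a * (r s a + γ * ∑ s', T s a s' * VU s'))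
    (hV : ∀ s, V s = ∑ a, π s a * (r s a + γ * ∑ s', T s a s' * V s'))
    (Q : S → A → ℝ)
    (hQ : ∀ s a, Q s a = r s a + γ * ∑ s', T s a s' * V s')
    (d : ℕ → S → ℝ)
    (hd0 : ∀ s, d 0 s = ρ s)
    (hds : ∀ t s', d (t + 1) s' = ∑ s, ∑ a, d t s * πU s a * T s a s') :
    (∑ s, ρ s * VU s) =
      (∑ s, ρ s * V s) +
        ∑' t : ℕ, γ ^ t * ∑ s, ∑ a, d t s * πU s a * (Q s a - V s) :=
  performance_difference_general T r ρ γ hγ0 hγ1 hT0 hT1 hρ0 πU hπU0 hπU1 VU V hVU Q hQ d hd0 hds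
end

section
/- If two probability distributions μ and ν on a finite action set can be coupled by a joint distribution whose probability of disagreement is at most α, and |A^π(s,a)| ≤ ε for all a, then E_{a∼μ}[A^π(s,a)] ≤ 2αε, provided E_{a∼ν}[A^π(s,a)] = 0. -/
/-!
Since `ν` has mean zero, `E_μ[f] = E_μ[f] - E_ν[f] = ∑ J(a,b) (f a - f b)`. Diagonal pairs
contribute nothing, and each disagreeing pair contributes at most `J(a,b) · 2ε`.
-/

open Finset

def disagreement {ι R : Type*} [Fintype ι] [DecidableEq ι] [AddCommMonoid R]
    (J : ι → ι → R) : R :=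
  ∑ a, ∑ b, if a ≠ b then J a b else 0

theorem sum_mul_sub_sum_mul_eq_of_marginals {ι R : Type*} [Fintype ι] [CommRing R]
    {μ ν : ι → R} {J : ι → ι → R}
    (hμ : ∀ a, μ a = ∑ b, J a b) (hν : ∀ b, ν b = ∑ a, J a b) (f : ι → R) :
    ∑ a, μ a * f a - ∑ b, ν b * f b = ∑ a, ∑ b, J a b * (f a - f b) := by
  simp only [hμ, hν, sum_mul, mul_sub, sum_sub_distrib]
  rw [sum_comm (f := fun b a => J a b * f b)]

theorem mul_sub_le_ite_mul {ι R : Type*} [DecidableEq ι]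
    [CommRing R] [LinearOrder R] [IsStrictOrderedRing R]
    {J : ι → ι → R} {f : ι → R} {ε : R} (hJ : ∀ a b, 0 ≤ J a b) (hf : ∀ a, |f a| ≤ ε)
    (a b : ι) : J a b * (f a - f b) ≤ (if a ≠ b then J a b else 0) * (2 * ε) := by
  by_cases hab : a = b
  · simp [hab]
  · rw [if_pos hab]
    have hfa := abs_le.mp (hf a)
    have hfb := abs_le.mp (hf b)
    exact mul_le_mul_of_nonneg_left (by linarith) (hJ a b)

theorem sum_sum_mul_sub_le_disagreement_mul {ι R : Type*} [Fintype ι] [DecidableEq ι]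
    [CommRing R] [LinearOrder R] [IsStrictOrderedRing R]
    {J : ι → ι → R} {f : ι → R} {ε : R} (hJ : ∀ a b, 0 ≤ J a b) (hf : ∀ a, |f a| ≤ ε) :
    ∑ a, ∑ b, J a b * (f a - f b) ≤ disagreement J * (2 * ε) := by
  calc ∑ a, ∑ b, J a b * (f a - f b)
      ≤ ∑ a, ∑ b, (if a ≠ b then J a b else 0) * (2 * ε) :=
        sum_le_sum fun a _ => sum_le_sum fun b _ => mul_sub_le_ite_mul hJ hf a b
    _ = disagreement J * (2 * ε) := by simp only [disagreement, sum_mul]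

/-- If `μ` and `ν` on a finite action set are coupled by a joint distribution `J` whose
probability of disagreement is at most `α`, `|A(a)| ≤ ε` for all `a`, and the expectation
of `A` under `ν` is zero, then `E_{a∼μ}[A(a)] ≤ 2αε`. -/
theorem coupled_advantage_bound
    {A : Type} [Fintype A] [Nonempty A] [DecidableEq A]
    (μ ν : A → ℝ) (J : A → A → ℝ) (f : A → ℝ) (α ε : ℝ)
    (hJ0 : ∀ a b, 0 ≤ J a b)
    (hμ : ∀ a, μ a = ∑ b, J a b)
    (hν : ∀ b, ν b = ∑ a, J a b)
    (hdis : (∑ a, ∑ b, if a ≠ b then J a b else 0) ≤ α)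
    (hf : ∀ a, |f a| ≤ ε)
    (hν0 : ∑ a, ν a * f a = 0) :
    ∑ a, μ a * f a ≤ 2 * α * ε := by
  have hε : 0 ≤ ε := (abs_nonneg _).trans (hf (Classical.arbitrary A))
  calc ∑ a, μ a * f a = ∑ a, ∑ b, J a b * (f a - f b) := by
        rw [← sum_mul_sub_sum_mul_eq_of_marginals hμ hν f, hν0, sub_zero]
    _ ≤ disagreement J * (2 * ε) := sum_sum_mul_sub_le_disagreement_mul hJ0 hf
    _ ≤ α * (2 * ε) := by gcongr; exact hdis
    _ = 2 * α * ε := by ring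
end

section
/- Let π_U and π be policies in a finite discounted MDP, ε = max_{s,a} |Q^π(s,a) − V^π(s)|, and D_KL^max(π_U, π) = max_s D_KL(π_U(·|s) ‖ π(·|s)). Then J(π) ≥ J(π_U) − (2ε/(1−γ)) · √(D_KL^max(π_U, π)). -/
/-!
The gap `Δ = V^{π_U} - V^π` satisfies the performance-difference recursion
`Δ s = ∑ₐ π_U(a|s) (Q^π(s,a) - V^π(s)) + γ 𝔼_{a ∼ π_U, s' ∼ T}[Δ s']`.
The advantage `Q^π - V^π` has mean zero under `π`, so its mean under `π_U` is at most
`ε ‖π_U(·|s) - π(·|s)‖₁`, and `‖p - q‖₁ ≤ ‖√p - √q‖₂ ‖√p + √q‖₂ ≤ 2 √(D_KL(p ‖ q))` because the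
squared Hellinger distance is dominated by the KL divergence. At a state where `Δ` is maximal the
recursion gives `max Δ ≤ 2ε √D_KL^max + γ max Δ`; averaging over `ρ₀` finishes.
-/

open Finset

section Divergence

open Real

variable {A : Type*} [Fintype A]

theorem sq_sqrt_sub_sqrt_le_mul_log_div_sub_add {p q : ℝ} (hp : 0 ≤ p) (hq : 0 ≤ q)
    (hpq : 0 < p → 0 < q) : (√p - √q) ^ 2 ≤ p * log (p / q) - p + q := by
  rcases hp.eq_or_lt with rfl | hp
  · simp [sq_sqrt hq]
  obtain ⟨x, hx, rfl⟩ : ∃ x, 0 < x ∧ p = x ^ 2 := ⟨√p, sqrt_pos.2 hp, (sq_sqrt hp.le).symm⟩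
  obtain ⟨y, hy, rfl⟩ : ∃ y, 0 < y ∧ q = y ^ 2 :=
    ⟨√q, sqrt_pos.2 (hpq hp), (sq_sqrt hq).symm⟩
  have hlog : log (x ^ 2 / y ^ 2) = -2 * log (y / x) := by
    rw [← div_pow, log_pow, ← inv_div, log_inv]; push_cast; ring
  have key : x ^ 2 * log (y / x) ≤ x * y - x ^ 2 :=
    calc x ^ 2 * log (y / x) ≤ x ^ 2 * (y / x - 1) :=
          mul_le_mul_of_nonneg_left (log_le_sub_one_of_pos (div_pos hy hx)) (sq_nonneg x)
      _ = x * y - x ^ 2 := by field_simp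
  rw [sqrt_sq hx.le, sqrt_sq hy.le, hlog]
  nlinarith

variable {p q : A → ℝ}

theorem sum_sq_sqrt_sub_sqrt_le_sum_mul_log_div (hp0 : ∀ a, 0 ≤ p a) (hp1 : ∑ a, p a = 1)
    (hq0 : ∀ a, 0 ≤ q a) (hq1 : ∑ a, q a = 1) (hpq : ∀ a, 0 < p a → 0 < q a) :
    ∑ a, (√(p a) - √(q a)) ^ 2 ≤ ∑ a, p a * log (p a / q a) :=
  calc ∑ a, (√(p a) - √(q a)) ^ 2 ≤ ∑ a, (p a * log (p a / q a) - p a + q a) :=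
        sum_le_sum fun a _ ↦ sq_sqrt_sub_sqrt_le_mul_log_div_sub_add (hp0 a) (hq0 a) (hpq a)
    _ = ∑ a, p a * log (p a / q a) := by
        rw [sum_add_distrib, sum_sub_distrib, hp1, hq1]; ring

theorem sum_abs_sub_le_two_mul_sqrt_sum_mul_log_div (hp0 : ∀ a, 0 ≤ p a) (hp1 : ∑ a, p a = 1)
    (hq0 : ∀ a, 0 ≤ q a) (hq1 : ∑ a, q a = 1) (hpq : ∀ a, 0 < p a → 0 < q a) :
    ∑ a, |p a - q a| ≤ 2 * √(∑ a, p a * log (p a / q a)) := by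
  have hhellinger := sum_sq_sqrt_sub_sqrt_le_sum_mul_log_div hp0 hp1 hq0 hq1 hpq
  have hsum : ∑ a, (√(p a) + √(q a)) ^ 2 ≤ 4 :=
    calc ∑ a, (√(p a) + √(q a)) ^ 2 ≤ ∑ a, 2 * (p a + q a) := sum_le_sum fun a _ ↦ by
          nlinarith [sq_sqrt (hp0 a), sq_sqrt (hq0 a), sq_nonneg (√(p a) - √(q a))]
      _ = 4 := by rw [← mul_sum, sum_add_distrib, hp1, hq1]; norm_num
  calc ∑ a, |p a - q a| = ∑ a, |√(p a) - √(q a)| * (√(p a) + √(q a)) :=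
        sum_congr rfl fun a _ ↦ by
          rw [← abs_of_nonneg (by positivity : 0 ≤ √(p a) + √(q a)), ← abs_mul, mul_comm,
            ← sq_sub_sq, sq_sqrt (hp0 a), sq_sqrt (hq0 a)]
    _ ≤ √(∑ a, |√(p a) - √(q a)| ^ 2) * √(∑ a, (√(p a) + √(q a)) ^ 2) :=
        sum_mul_le_sqrt_mul_sqrt _ _ _
    _ ≤ √(∑ a, p a * log (p a / q a)) * √4 := by
        simp only [sq_abs]
        exact mul_le_mul (sqrt_le_sqrt hhellinger) (sqrt_le_sqrt hsum) (sqrt_nonneg _)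
          (sqrt_nonneg _)
    _ = 2 * √(∑ a, p a * log (p a / q a)) := by
        rw [show (4 : ℝ) = 2 ^ 2 by norm_num, sqrt_sq zero_le_two, mul_comm]

theorem sum_mul_le_two_mul_mul_sqrt_sum_mul_log_div (hp0 : ∀ a, 0 ≤ p a) (hp1 : ∑ a, p a = 1)
    (hq0 : ∀ a, 0 ≤ q a) (hq1 : ∑ a, q a = 1) (hpq : ∀ a, 0 < p a → 0 < q a)
    {f : A → ℝ} {ε : ℝ} (hf : ∑ a, q a * f a = 0) (hε : ∀ a, |f a| ≤ ε) :
    ∑ a, p a * f a ≤ 2 * ε * √(∑ a, p a * log (p a / q a)) := by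
  obtain ⟨a₀, -, -⟩ := exists_ne_zero_of_sum_ne_zero (hp1.trans_ne one_ne_zero)
  have hε0 : 0 ≤ ε := (abs_nonneg _).trans (hε a₀)
  calc ∑ a, p a * f a = ∑ a, (p a - q a) * f a := by
        simp only [sub_mul, sum_sub_distrib, hf, sub_zero]
    _ ≤ ∑ a, |p a - q a| * ε := sum_le_sum fun a _ ↦ (le_abs_self _).trans
        (abs_mul (p a - q a) (f a) ▸ mul_le_mul_of_nonneg_left (hε a) (abs_nonneg _))
    _ = (∑ a, |p a - q a|) * ε := (sum_mul _ _ _).symm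
    _ ≤ 2 * √(∑ a, p a * log (p a / q a)) * ε :=
        mul_le_mul_of_nonneg_right
          (sum_abs_sub_le_two_mul_sqrt_sum_mul_log_div hp0 hp1 hq0 hq1 hpq) hε0
    _ = 2 * ε * √(∑ a, p a * log (p a / q a)) := by ring

end Divergence

theorem sum_mul_le_of_forall_le {S : Type*} [Fintype S] {w x : S → ℝ} {c : ℝ}
    (hw0 : ∀ s, 0 ≤ w s) (hw1 : ∑ s, w s = 1) (hx : ∀ s, x s ≤ c) : ∑ s, w s * x s ≤ c :=
  calc ∑ s, w s * x s ≤ ∑ s, w s * c :=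
        sum_le_sum fun s _ ↦ mul_le_mul_of_nonneg_left (hx s) (hw0 s)
    _ = c := by rw [← sum_mul, hw1, one_mul]

theorem le_div_one_sub_of_le_add_mul_sum {S : Type*} [Fintype S] {P : S → S → ℝ}
    (hP0 : ∀ s s', 0 ≤ P s s') (hP1 : ∀ s, ∑ s', P s s' = 1) {γ c : ℝ} (hγ0 : 0 ≤ γ)
    (hγ1 : γ < 1) {x : S → ℝ} (hx : ∀ s, x s ≤ c + γ * ∑ s', P s s' * x s') (s : S) :
    x s ≤ c / (1 - γ) := by
  obtain ⟨s₀, -, hs₀⟩ := exists_max_image univ x ⟨s, mem_univ s⟩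
  have hmean : ∑ s', P s₀ s' * x s' ≤ x s₀ :=
    sum_mul_le_of_forall_le (hP0 s₀) (hP1 s₀) fun s' ↦ hs₀ s' (mem_univ s')
  have hmax : x s₀ ≤ c / (1 - γ) := by
    rw [le_div_iff₀ (sub_pos.2 hγ1)]
    nlinarith [hx s₀, mul_le_mul_of_nonneg_left hmean hγ0]
  exact (hs₀ s (mem_univ s)).trans hmax

theorem value_sub_value_eq_sum_advantage_add {S A : Type*} [Fintype S] [Fintype A]
    {T : S → A → S → ℝ} {r : S → A → ℝ} {γ : ℝ} {πU : S → A → ℝ} (hπU1 : ∀ s, ∑ a, πU s a = 1)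
    {VU V : S → ℝ} (hVU : ∀ s, VU s = ∑ a, πU s a * (r s a + γ * ∑ s', T s a s' * VU s'))
    {Q : S → A → ℝ} (hQ : ∀ s a, Q s a = r s a + γ * ∑ s', T s a s' * V s') (s : S) :
    VU s - V s = ∑ a, πU s a * (Q s a - V s)
      + γ * ∑ s', (∑ a, πU s a * T s a s') * (VU s' - V s') := by
  have hmean : ∑ a, πU s a * V s = V s := by rw [← sum_mul, hπU1, one_mul]
  have hswap : γ * ∑ s', (∑ a, πU s a * T s a s') * (VU s' - V s')
      = ∑ a, πU s a * (γ * ∑ s', T s a s' * (VU s' - V s')) := by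
    simp only [mul_sum, sum_mul]
    rw [sum_comm]
    exact sum_congr rfl fun _ _ ↦ sum_congr rfl fun _ _ ↦ by ring
  calc VU s - V s
      = ∑ a, πU s a * (Q s a + γ * ∑ s', T s a s' * (VU s' - V s')) - ∑ a, πU s a * V s := by
        rw [hmean, hVU s]
        congr 1
        refine sum_congr rfl fun a _ ↦ ?_
        simp only [hQ, mul_sub, sum_sub_distrib]
        ring
    _ = _ := by
        rw [hswap, ← sum_sub_distrib, ← sum_add_distrib]
        exact sum_congr rfl fun a _ ↦ by ring

/-- Main performance bound: with `ε = max_{s,a} |Q^π(s,a) − V^π(s)|` and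
`D_KL^max(πU,π) = max_s D_KL(πU(·|s) ‖ π(·|s))`, we have
`J(π) ≥ J(πU) − (2ε/(1−γ))·√(D_KL^max(πU,π))`. -/
theorem performance_lower_bound
    {S A : Type} [Fintype S] [Fintype A] [Nonempty S] [Nonempty A]
    (T : S → A → S → ℝ) (r : S → A → ℝ) (ρ : S → ℝ) (γ : ℝ)
    (hγ0 : 0 < γ) (hγ1 : γ < 1)
    (hT0 : ∀ s a s', 0 ≤ T s a s') (hT1 : ∀ s a, ∑ s', T s a s' = 1)
    (hρ0 : ∀ s, 0 ≤ ρ s) (hρ1 : ∑ s, ρ s = 1)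
    (πU π : S → A → ℝ)
    (hπU0 : ∀ s a, 0 ≤ πU s a) (hπU1 : ∀ s, ∑ a, πU s a = 1)
    (hπ0 : ∀ s a, 0 ≤ π s a) (hπ1 : ∀ s, ∑ a, π s a = 1)
    (hsupp : ∀ s a, 0 < πU s a → 0 < π s a)
    (VU V : S → ℝ)
    (hVU : ∀ s, VU s = ∑ a, πU s a * (r s a + γ * ∑ s', T s a s' * VU s'))
    (hV : ∀ s, V s = ∑ a, π s a * (r s a + γ * ∑ s', T s a s' * V s'))
    (Q : S → A → ℝ)
    (hQ : ∀ s a, Q s a = r s a + γ * ∑ s', T s a s' * V s')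
    (ε DKLmax : ℝ)
    (hε : ε = (Finset.univ : Finset (S × A)).sup' Finset.univ_nonempty
        (fun p => |Q p.1 p.2 - V p.1|))
    (hDKL : DKLmax = (Finset.univ : Finset S).sup' Finset.univ_nonempty
        (fun s => ∑ a, πU s a * Real.log (πU s a / π s a))) :
    (∑ s, ρ s * VU s) - (2 * ε / (1 - γ)) * Real.sqrt DKLmax ≤ ∑ s, ρ s * V s := by
  have hadv_π : ∀ s, ∑ a, π s a * (Q s a - V s) = 0 := fun s ↦ by
    simp only [mul_sub, sum_sub_distrib, ← sum_mul, hπ1, one_mul, hQ, ← hV, sub_self]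
  have hadv_le : ∀ s a, |Q s a - V s| ≤ ε := fun s a ↦
    hε ▸ le_sup' (fun p : S × A ↦ |Q p.1 p.2 - V p.1|) (mem_univ (s, a))
  have hKL_le : ∀ s, ∑ a, πU s a * Real.log (πU s a / π s a) ≤ DKLmax := fun s ↦
    hDKL ▸ le_sup' (fun s ↦ ∑ a, πU s a * Real.log (πU s a / π s a)) (mem_univ s)
  have hadv : ∀ s, ∑ a, πU s a * (Q s a - V s) ≤ 2 * ε * √DKLmax := fun s ↦ by
    have hε0 : 0 ≤ ε := (abs_nonneg _).trans (hadv_le s (Classical.arbitrary A))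
    refine (sum_mul_le_two_mul_mul_sqrt_sum_mul_log_div (hπU0 s) (hπU1 s) (hπ0 s) (hπ1 s)
      (hsupp s) (hadv_π s) (hadv_le s)).trans ?_
    gcongr
    exact hKL_le s
  have hgap : ∀ s, VU s - V s ≤ 2 * ε * √DKLmax / (1 - γ) :=
    le_div_one_sub_of_le_add_mul_sum (P := fun s s' ↦ ∑ a, πU s a * T s a s')
      (fun s s' ↦ sum_nonneg fun a _ ↦ mul_nonneg (hπU0 s a) (hT0 s a s'))
      (fun s ↦ by rw [sum_comm]; simp only [← mul_sum, hT1, mul_one, hπU1]) hγ0.le hγ1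
      (fun s ↦ (value_sub_value_eq_sum_advantage_add hπU1 hVU hQ s).trans_le
        (add_le_add_left (hadv s) _))
  have hρgap := sum_mul_le_of_forall_le hρ0 hρ1 hgap
  simp only [mul_sub, sum_sub_distrib] at hρgap
  rw [div_mul_eq_mul_div]
  linarith
end

section
/- For any two policies π_U and π, the discounted cumulative expected advantage under π_U is bounded: E_{τ∼π_U}[ Σ_{t=0}^∞ γ^t A^π(s_t,a_t) ] ≤ (2ε/(1−γ)) · max_s D_TV(π_U(·|s), π(·|s)), where ε = max_{s,a}|A^π(s,a)|. -/
/-- The discounted cumulative expected advantage of `π` along trajectories of `πU` is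
bounded by `(2ε/(1−γ)) · max_s D_TV(πU(·|s), π(·|s))`, where `ε = max_{s,a}|A^π(s,a)|`. -/
theorem cumulative_advantage_bound
    {S A : Type} [Fintype S] [Fintype A] [Nonempty S] [Nonempty A]
    (T : S → A → S → ℝ) (ρ : S → ℝ) (γ : ℝ)
    (hγ0 : 0 < γ) (hγ1 : γ < 1)
    (hT0 : ∀ s a s', 0 ≤ T s a s') (hT1 : ∀ s a, ∑ s', T s a s' = 1)
    (hρ0 : ∀ s, 0 ≤ ρ s) (hρ1 : ∑ s, ρ s = 1)
    (πU π : S → A → ℝ)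
    (hπU0 : ∀ s a, 0 ≤ πU s a) (hπU1 : ∀ s, ∑ a, πU s a = 1)
    (hπ0 : ∀ s a, 0 ≤ π s a) (hπ1 : ∀ s, ∑ a, π s a = 1)
    (Q : S → A → ℝ) (V : S → ℝ)
    (hV : ∀ s, V s = ∑ a, π s a * Q s a)
    (d : ℕ → S → ℝ)
    (hd0 : ∀ s, d 0 s = ρ s)
    (hds : ∀ t s', d (t + 1) s' = ∑ s, ∑ a, d t s * πU s a * T s a s')
    (ε tvmax : ℝ)
    (hε : ε = (Finset.univ : Finset (S × A)).sup' Finset.univ_nonempty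
        (fun p => |Q p.1 p.2 - V p.1|))
    (htv : tvmax = (Finset.univ : Finset S).sup' Finset.univ_nonempty
        (fun s => (1 / 2) * ∑ a, |πU s a - π s a|)) :
    (∑' t : ℕ, γ ^ t * ∑ s, ∑ a, d t s * πU s a * (Q s a - V s)) ≤
      (2 * ε / (1 - γ)) * tvmax := by
  have hεnn : 0 ≤ ε := by
    rw [hε]
    exact le_trans (abs_nonneg _)
      (Finset.le_sup' (fun p : S × A => |Q p.1 p.2 - V p.1|)
        (Finset.mem_univ (Classical.arbitrary (S × A))))
  have hεb : ∀ s a, |Q s a - V s| ≤ ε := by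
    intro s a
    rw [hε]
    exact Finset.le_sup' (fun p : S × A => |Q p.1 p.2 - V p.1|) (Finset.mem_univ (s, a))
  have htvb : ∀ s, ∑ a, |πU s a - π s a| ≤ 2 * tvmax := by
    intro s
    have h : (1 / 2 : ℝ) * ∑ a, |πU s a - π s a| ≤ tvmax := by
      rw [htv]
      exact Finset.le_sup' (fun s => (1 / 2 : ℝ) * ∑ a, |πU s a - π s a|) (Finset.mem_univ s)
    linarith
  have htvnn : 0 ≤ tvmax := by
    have h := htvb (Classical.arbitrary S)
    have h2 : (0:ℝ) ≤ ∑ a, |πU (Classical.arbitrary S) a - π (Classical.arbitrary S) a| :=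
      Finset.sum_nonneg fun a _ => abs_nonneg _
    linarith
  have hdnn : ∀ t s, 0 ≤ d t s := by
    intro t
    induction t with
    | zero => intro s; rw [hd0]; exact hρ0 s
    | succ t ih =>
      intro s'
      rw [hds]
      exact Finset.sum_nonneg fun s _ => Finset.sum_nonneg fun a _ =>
        mul_nonneg (mul_nonneg (ih s) (hπU0 s a)) (hT0 s a s')
  have hdsum : ∀ t, ∑ s, d t s = 1 := by
    intro t
    induction t with
    | zero => simp [hd0, hρ1]
    | succ t ih =>
      calc ∑ s', d (t + 1) s' = ∑ s', ∑ s, ∑ a, d t s * πU s a * T s a s' := by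
            exact Finset.sum_congr rfl fun s' _ => hds t s'
        _ = ∑ s, ∑ a, ∑ s', d t s * πU s a * T s a s' := by
            rw [Finset.sum_comm]
            exact Finset.sum_congr rfl fun s _ => Finset.sum_comm
        _ = ∑ s, ∑ a, d t s * πU s a := by
            refine Finset.sum_congr rfl fun s _ => Finset.sum_congr rfl fun a _ => ?_
            rw [← Finset.mul_sum, hT1, mul_one]
        _ = ∑ s, d t s := by
            refine Finset.sum_congr rfl fun s _ => ?_
            rw [← Finset.mul_sum, hπU1, mul_one]
        _ = 1 := ih
  set C : ℝ := 2 * ε * tvmax with hC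
  have hCnn : 0 ≤ C := by positivity
  have hg : ∀ s, |∑ a, πU s a * (Q s a - V s)| ≤ C := by
    intro s
    have hz : ∑ a, π s a * (Q s a - V s) = 0 := by
      simp only [mul_sub, Finset.sum_sub_distrib, ← Finset.sum_mul, hπ1, one_mul]
      rw [← hV s]
      ring
    have heq : ∑ a, πU s a * (Q s a - V s) = ∑ a, (πU s a - π s a) * (Q s a - V s) := by
      simp only [sub_mul, Finset.sum_sub_distrib, hz, sub_zero]
    rw [heq]
    calc |∑ a, (πU s a - π s a) * (Q s a - V s)|
        ≤ ∑ a, |(πU s a - π s a) * (Q s a - V s)| := Finset.abs_sum_le_sum_abs _ _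
      _ = ∑ a, |πU s a - π s a| * |Q s a - V s| := by simp [abs_mul]
      _ ≤ ∑ a, |πU s a - π s a| * ε :=
          Finset.sum_le_sum fun a _ => mul_le_mul_of_nonneg_left (hεb s a) (abs_nonneg _)
      _ = (∑ a, |πU s a - π s a|) * ε := (Finset.sum_mul _ _ _).symm
      _ ≤ (2 * tvmax) * ε := mul_le_mul_of_nonneg_right (htvb s) hεnn
      _ = C := by rw [hC]; ring
  have hf : ∀ t, |∑ s, ∑ a, d t s * πU s a * (Q s a - V s)| ≤ C := by
    intro t
    have heq : ∑ s, ∑ a, d t s * πU s a * (Q s a - V s)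
        = ∑ s, d t s * ∑ a, πU s a * (Q s a - V s) := by
      refine Finset.sum_congr rfl fun s _ => ?_
      rw [Finset.mul_sum]
      exact Finset.sum_congr rfl fun a _ => by ring
    rw [heq]
    calc |∑ s, d t s * ∑ a, πU s a * (Q s a - V s)|
        ≤ ∑ s, |d t s * ∑ a, πU s a * (Q s a - V s)| := Finset.abs_sum_le_sum_abs _ _
      _ = ∑ s, d t s * |∑ a, πU s a * (Q s a - V s)| := by
          refine Finset.sum_congr rfl fun s _ => ?_
          rw [abs_mul, abs_of_nonneg (hdnn t s)]
      _ ≤ ∑ s, d t s * C :=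
          Finset.sum_le_sum fun s _ => mul_le_mul_of_nonneg_left (hg s) (hdnn t s)
      _ = C := by rw [← Finset.sum_mul, hdsum, one_mul]
  have hgeo : Summable (fun t : ℕ => γ ^ t * C) :=
    (summable_geometric_of_lt_one hγ0.le hγ1).mul_right C
  have hsum1 : Summable (fun t : ℕ => γ ^ t * ∑ s, ∑ a, d t s * πU s a * (Q s a - V s)) := by
    apply Summable.of_norm_bounded hgeo
    intro t
    rw [Real.norm_eq_abs, abs_mul, abs_pow, abs_of_pos hγ0]
    exact mul_le_mul_of_nonneg_left (hf t) (pow_nonneg hγ0.le t)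
  have hle : (∑' t : ℕ, γ ^ t * ∑ s, ∑ a, d t s * πU s a * (Q s a - V s))
      ≤ ∑' t : ℕ, γ ^ t * C := by
    refine Summable.tsum_le_tsum (fun t => ?_) hsum1 hgeo
    exact mul_le_mul_of_nonneg_left (le_of_abs_le (hf t)) (pow_nonneg hγ0.le t)
  have htsum : (∑' t : ℕ, γ ^ t * C) = (2 * ε / (1 - γ)) * tvmax := by
    rw [tsum_mul_right, tsum_geometric_of_lt_one hγ0.le hγ1, hC]
    have h1γ : (1 : ℝ) - γ ≠ 0 := by linarith
    field_simp
  linarith [hle, htsum.le, htsum.ge]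
end
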